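/- Let p : F → E be a functor, f : ξ → ξ' a cartesian morphism lying over φ : S → S', G a finite group, P ⊆ G a subgroup of index m, and ρ : G → Aut_S(ξ) a group homomorphism. Assume the kernel A = Aut_ξ(ξ') of the restriction homomorphism res : Aut_{S'}(ξ') → Aut_S(ξ) is abelian and uniquely m-divisible. Suppose that for every σ ∈ G there exists σ' ∈ Aut_{S'}(ξ') with res(σ') = ρ(σ). Then there exists a group homomorphism ρ' : G → Aut_{S'}(ξ') with res ∘ ρ' = ρ if and only if there exists a group homomorphism ρ'_P : P → Aut_{S'}(ξ') with res ∘ ρ'_P = ρ|_P. -/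

import Mathlib

open CategoryTheory

/-- A morphism `f : ξ ⟶ ξ'` is cartesian for the functor `p : F ⥤ E` if for every
object `ζ` lying over `S = p.obj ξ`, composition with `f` gives a bijection between
morphisms `ζ ⟶ ξ` lying over `𝟙 S` and morphisms `ζ ⟶ ξ'` lying over `φ = p.map f`. -/
def IsCartesianMor {F E : Type*} [Category F] [Category E] (p : F ⥤ E)
    {ξ ξ' : F} (f : ξ ⟶ ξ') : Prop :=
  ∀ (ζ : F) (e : p.obj ζ = p.obj ξ),
    Function.Bijective (fun h : {h : ζ ⟶ ξ // p.map h = eqToHom e} =>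
      (⟨h.1 ≫ f, by rw [p.map_comp, h.2]⟩ :
        {g : ζ ⟶ ξ' // p.map g = eqToHom e ≫ p.map f}))

/-- The subgroup of `Aut ξ` consisting of automorphisms lying over the identity
of `S = p.obj ξ`. -/
def vertAut {F E : Type*} [Category F] [Category E] (p : F ⥤ E) (ξ : F) :
    Subgroup (Aut ξ) where
  carrier := {σ | p.map σ.hom = 𝟙 (p.obj ξ)}
  one_mem' := p.map_id ξ
  mul_mem' := by
    intro σ τ hσ hτ
    show p.map (τ.hom ≫ σ.hom) = 𝟙 _
    rw [p.map_comp, hσ, hτ, Category.id_comp]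
  inv_mem' := by
    intro σ hσ
    show p.map σ.symm.hom = 𝟙 _
    have h : p.map σ.hom = 𝟙 _ := hσ
    calc p.map σ.inv = p.map σ.hom ≫ p.map σ.inv := by rw [h, Category.id_comp]
      _ = p.map (σ.hom ≫ σ.inv) := (p.map_comp _ _).symm
      _ = 𝟙 _ := by exact (congrArg p.map (Iso.hom_inv_id (σ : ξ ≅ ξ))).trans (p.map_id _)

/-!
With `H = Aut_{S'}(ξ')` and `K = Aut_S(ξ)`, lifts of `ρ` along `res` are splittings of the
pullback `π : L = G ×_K H → G`, an extension of `G` by the abelian group `A = ker res`. Fix a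
section `s` of `π` with `s (x * p) = s x * σ p` for `p ∈ P`, where `σ` splits `π` over `P`, and
attach to `l ∈ L` the defect `δ l = ∏_{q ∈ G/P} l * s (π l⁻¹ * q) * (s q)⁻¹ ∈ A`. Then
`δ (a * l) = a ^ m * δ l` for `a ∈ A`, and `δ (l * l') = l * δ l' * l⁻¹ * δ l`. Unique
`m`-divisibility of `A` makes every fibre of `π` contain exactly one element of defect `1`, and the
cocycle rule shows that these elements form a subgroup mapping isomorphically onto `G`.
-/

open scoped IsMulCommutative

theorem QuotientGroup.prod_out_mul_left {G M : Type*} [Group G] [CommMonoid M] {P : Subgroup G}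
    [Fintype (G ⧸ P)] {F : G → M} (hF : ∀ x (p : P), F (x * p) = F x) (g : G) :
    ∏ q : G ⧸ P, F (g * q.out) = ∏ q : G ⧸ P, F q.out := by
  have hF_out (x : G) : F (x : G ⧸ P).out = F x := by
    obtain ⟨p, hp⟩ := QuotientGroup.mk_out_eq_mul P x
    rw [hp, hF]
  calc ∏ q : G ⧸ P, F (g * q.out) = ∏ q : G ⧸ P, F (g • q).out := by
        refine Fintype.prod_congr _ _ fun q => ?_
        rw [← hF_out, ← smul_eq_mul, ← MulAction.Quotient.smul_mk, QuotientGroup.out_eq']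
    _ = ∏ q : G ⧸ P, F q.out := Equiv.prod_comp (MulAction.toPerm g) fun q : G ⧸ P => F q.out

namespace MonoidHom

section Defect

variable {L G : Type*} [Group L] [Group G] (π : L →* G) (P : Subgroup G)
  {s : G → L} (hs : ∀ g, π (s g) = g)

def defectTerm (l : L) (x : G) : π.ker :=
  ⟨l * s ((π l)⁻¹ * x) * (s x)⁻¹, by simp [hs]⟩

theorem defectTerm_mul_right {τ : P → L} (hsP : ∀ x (p : P), s (x * p) = s x * τ p)
    (l : L) (x : G) (p : P) : π.defectTerm hs l (x * p) = π.defectTerm hs l x := by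
  ext
  simp only [defectTerm, ← mul_assoc, hsP]
  group

theorem defectTerm_mul (l l' : L) (x : G) :
    π.defectTerm hs (l * l') x =
      MulAut.conjNormal l (π.defectTerm hs l' ((π l)⁻¹ * x)) * π.defectTerm hs l x := by
  ext
  simp only [defectTerm, MulAut.conjNormal_apply, Subgroup.coe_mul, map_mul, mul_inv_rev,
    mul_assoc]
  group

theorem defectTerm_ker_mul (a : π.ker) (l : L) (x : G) :
    π.defectTerm hs (a * l) x = a * π.defectTerm hs l x := by
  ext
  simp only [defectTerm, map_mul, π.mem_ker.mp a.2, one_mul, Subgroup.coe_mul, mul_assoc]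

theorem exists_section_mul_right (hπ : Function.Surjective π) (σ : P →* L)
    (hσ : π.comp σ = P.subtype) :
    ∃ s : G → L, (∀ g, π (s g) = g) ∧ ∀ x (p : P), s (x * p) = s x * σ p := by
  have hσ_apply (p : P) : π (σ p) = p := DFunLike.congr_fun hσ p
  choose t ht using hπ
  have hmem (x : G) : (x : G ⧸ P).out⁻¹ * x ∈ P := QuotientGroup.eq.mp (QuotientGroup.out_eq' _)
  refine ⟨fun x => t (x : G ⧸ P).out * σ ⟨_, hmem x⟩, fun x => by simp [ht, hσ_apply],
    fun x p => ?_⟩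
  simp only [QuotientGroup.mk_mul_of_mem x p.2, mul_assoc, ← map_mul]
  congr 2
  exact Subtype.ext (mul_assoc _ _ _).symm

variable [Fintype (G ⧸ P)] [IsMulCommutative π.ker]

noncomputable def defect (l : L) : π.ker := ∏ q : G ⧸ P, π.defectTerm hs l q.out

theorem defect_ker_mul (a : π.ker) (l : L) :
    π.defect P hs (a * l) = a ^ P.index * π.defect P hs l := by
  simp only [defect, defectTerm_ker_mul, Finset.prod_mul_distrib, Finset.prod_const,
    Finset.card_univ, P.index_eq_card, Nat.card_eq_fintype_card]

theorem defect_mul {τ : P → L} (hsP : ∀ x (p : P), s (x * p) = s x * τ p) (l l' : L) :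
    π.defect P hs (l * l') = MulAut.conjNormal l (π.defect P hs l') * π.defect P hs l := by
  simp only [defect, defectTerm_mul, Finset.prod_mul_distrib, ← map_prod,
    QuotientGroup.prod_out_mul_left (π.defectTerm_mul_right P hs hsP l')]

theorem eq_of_defect_eq (hdiv : Function.Injective fun a : π.ker => a ^ P.index) {l l' : L}
    (hπ : π l = π l') (hd : π.defect P hs l = π.defect P hs l') : l = l' := by
  set a : π.ker := ⟨l * l'⁻¹, by simp [hπ]⟩
  have hl : l = a * l' := by simp [a]
  have ha : a ^ P.index = 1 ^ P.index := by
    rw [hl, defect_ker_mul] at hd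
    simpa using hd
  rw [hl, hdiv ha, OneMemClass.coe_one, one_mul]

theorem exists_defect_eq_one (hdiv : Function.Surjective fun a : π.ker => a ^ P.index) (g : G) :
    ∃ l, π l = g ∧ π.defect P hs l = 1 := by
  obtain ⟨b, hb⟩ := hdiv (π.defect P hs (s g))
  refine ⟨(b⁻¹ : π.ker) * s g, by simp [hs, π.mem_ker.mp b.2], ?_⟩
  rw [defect_ker_mul, ← hb, inv_pow, inv_mul_cancel]

theorem exists_splitting_of_splitting_on_subgroup (hπ : Function.Surjective π) (σ : P →* L)
    (hσ : π.comp σ = P.subtype) (hdiv : Function.Bijective fun a : π.ker => a ^ P.index) :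
    ∃ ψ : G →* L, π.comp ψ = MonoidHom.id G := by
  obtain ⟨s, hs, hsP⟩ := π.exists_section_mul_right P hπ σ hσ
  choose ψ hψπ hψ using π.exists_defect_eq_one P hs hdiv.2
  refine ⟨MonoidHom.mk' ψ fun g h => π.eq_of_defect_eq P hs hdiv.1 ?_ ?_, MonoidHom.ext hψπ⟩
  · simp [hψπ]
  · rw [π.defect_mul P hs hsP, hψ, hψ, hψ, map_one, one_mul]

end Defect

section Pullback

variable {G H K : Type*} [Group G] [Group H] [Group K] (ρ : G →* K) (res : H →* K)

def pullback : Subgroup (G × H) :=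
  (ρ.comp (MonoidHom.fst G H)).eqLocus (res.comp (MonoidHom.snd G H))

theorem mem_pullback {x : G × H} : x ∈ pullback ρ res ↔ ρ x.1 = res x.2 := Iff.rfl

def pullbackFst : pullback ρ res →* G := (MonoidHom.fst G H).comp (pullback ρ res).subtype

theorem pullbackFst_surjective (hρ : ρ.range ≤ res.range) :
    Function.Surjective (pullbackFst ρ res) := fun g => by
  obtain ⟨h, hh⟩ := hρ ⟨g, rfl⟩
  exact ⟨⟨(g, h), hh.symm⟩, rfl⟩

def pullbackFstKerEquiv : (pullbackFst ρ res).ker ≃* res.ker where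
  toFun x := ⟨x.1.1.2, by
    have h1 : x.1.1.1 = 1 := x.2
    rw [mem_ker, ← (mem_pullback ρ res).mp x.1.2, h1, map_one]⟩
  invFun a := ⟨⟨(1, a), by rw [mem_pullback, map_one, a.2]⟩, rfl⟩
  left_inv x := by
    have h1 : x.1.1.1 = 1 := x.2
    ext
    · exact h1.symm
    · rfl
  right_inv a := rfl
  map_mul' x y := rfl

theorem exists_lift_of_exists_lift_on_subgroup (P : Subgroup G) [Fintype (G ⧸ P)]
    [IsMulCommutative res.ker] (hdiv : Function.Bijective fun a : res.ker => a ^ P.index)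
    (hρ : ρ.range ≤ res.range) (ρP : P →* H) (hρP : res.comp ρP = ρ.comp P.subtype) :
    ∃ ρ' : G →* H, res.comp ρ' = ρ := by
  let e := pullbackFstKerEquiv ρ res
  have : IsMulCommutative (pullbackFst ρ res).ker :=
    ⟨⟨fun a b => e.injective (by rw [map_mul, map_mul, mul_comm])⟩⟩
  have hdiv' : Function.Bijective fun a : (pullbackFst ρ res).ker => a ^ P.index := by
    convert e.symm.bijective.comp (hdiv.comp e.bijective) using 1
    funext a
    simp [← map_pow]
  let σ : P →* pullback ρ res := (P.subtype.prod ρP).codRestrict _ fun p =>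
    (DFunLike.congr_fun hρP p).symm
  obtain ⟨ψ, hψ⟩ := (pullbackFst ρ res).exists_splitting_of_splitting_on_subgroup P
    (pullbackFst_surjective ρ res hρ) σ rfl hdiv'
  refine ⟨(MonoidHom.snd G H).comp ((pullback ρ res).subtype.comp ψ), MonoidHom.ext fun g => ?_⟩
  show res (ψ g).1.2 = ρ g
  rw [← (mem_pullback ρ res).mp (ψ g).2]
  exact congrArg ρ (DFunLike.congr_fun hψ g)

end Pullback

end MonoidHom

theorem extension_iff_extension_on_subgroup_general {F E : Type*} [Category F] [Category E]
    (p : F ⥤ E) {ξ ξ' : F}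
    {G : Type*} [Group G] [Finite G] (P : Subgroup G) (m : ℕ) (hm : P.index = m)
    (ρ : G →* vertAut p ξ)
    (res : vertAut p ξ' →* vertAut p ξ)
    (hA : ∀ a b : vertAut p ξ', a ∈ res.ker → b ∈ res.ker → a * b = b * a)
    (hdiv : ∀ h : vertAut p ξ', h ∈ res.ker →
      ∃! g : vertAut p ξ', g ∈ res.ker ∧ g ^ m = h)
    (hsurj : ∀ σ : G, ρ σ ∈ res.range) :
    (∃ ρ' : G →* vertAut p ξ', res.comp ρ' = ρ) ↔
      (∃ ρ'P : P →* vertAut p ξ', res.comp ρ'P = ρ.comp P.subtype) := by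
  refine ⟨fun ⟨ρ', h⟩ => ⟨ρ'.comp P.subtype, by rw [← MonoidHom.comp_assoc, h]⟩,
    fun ⟨ρP, hρP⟩ => ?_⟩
  have := Fintype.ofFinite (G ⧸ P)
  have : IsMulCommutative res.ker := ⟨⟨fun a b => Subtype.ext (hA a b a.2 b.2)⟩⟩
  have hpow : Function.Bijective fun a : res.ker => a ^ P.index := by
    refine (Function.bijective_iff_existsUnique _).2 fun a => ?_
    obtain ⟨b, ⟨hb, hba⟩, huniq⟩ := hdiv a a.2
    exact ⟨⟨b, hb⟩, Subtype.ext (hm ▸ hba),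
      fun c hc => Subtype.ext (huniq c ⟨c.2, hm ▸ congrArg Subtype.val hc⟩)⟩
  exact ρ.exists_lift_of_exists_lift_on_subgroup res P hpow
    (fun _ ⟨g, hg⟩ => hg ▸ hsurj g) ρP hρP

/-- Sylow-type reduction for extending group actions: if `P ⊆ G` has index `m`,
the kernel `A = Aut_ξ(ξ')` of the restriction homomorphism is abelian and uniquely
`m`-divisible, and every `ρ(σ)` lies in the image of `res`, then the `G`-action on
`ξ` extends to `ξ'` if and only if the `P`-action extends. -/
theorem extension_iff_extension_on_subgroup {F E : Type*} [Category F] [Category E]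
    (p : F ⥤ E) {ξ ξ' : F} (f : ξ ⟶ ξ') (hf : IsCartesianMor p f)
    {G : Type*} [Group G] [Finite G] (P : Subgroup G) (m : ℕ) (hm : P.index = m)
    (ρ : G →* vertAut p ξ)
    (res : vertAut p ξ' →* vertAut p ξ)
    (hres : ∀ σ' : vertAut p ξ',
      f ≫ (σ' : Aut ξ').hom = ((res σ' : Aut ξ)).hom ≫ f)
    (hA : ∀ a b : vertAut p ξ', a ∈ res.ker → b ∈ res.ker → a * b = b * a)
    (hdiv : ∀ h : vertAut p ξ', h ∈ res.ker →
      ∃! g : vertAut p ξ', g ∈ res.ker ∧ g ^ m = h)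
    (hsurj : ∀ σ : G, ρ σ ∈ res.range) :
    (∃ ρ' : G →* vertAut p ξ', res.comp ρ' = ρ) ↔
      (∃ ρ'P : P →* vertAut p ξ', res.comp ρ'P = ρ.comp P.subtype) :=
  extension_iff_extension_on_subgroup_general p P m hm ρ res hA hdiv hsurj
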